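/- arXiv:2604.23791 — 7 statements merged into one kernel-verified Lean document; each statement's English description precedes it below -/
import Mathlib

section
/- Let (Ω, ℱ, P) be a probability space, let M ≥ 1, and let 𝒜₁, …, 𝒜_M be sub-σ-algebras of ℱ. Let φ⋆ ≥ 0 and suppose that for each 1 ≤ r ≤ M−1, every event C in the σ-algebra generated by 𝒜₁ ∪ ⋯ ∪ 𝒜_r with P(C) > 0, and every event B ∈ 𝒜_{r+1}, one has |P(B ∣ C) − P(B)| ≤ φ⋆. Then for any events C_j ∈ 𝒜_j (j = 1, …, M), writing u_j := P(C_j), we have P(⋂_{j=1}^M C_jᶜ) ≤ ∏_{j=1}^M min(1, 1 − u_j + φ⋆). -/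
open MeasureTheory

/-!
Let `Dᵣ = ⋂_{j ≤ r} C_jᶜ`, an event of the σ-algebra generated by `𝒜 1, …, 𝒜 r`. The mixing
bound gives `P(C_{r+1} ∩ Dᵣ) ≥ P(Dᵣ) (u_{r+1} - φ⋆)`, hence
`P(D_{r+1}) = P(Dᵣ) - P(C_{r+1} ∩ Dᵣ) ≤ P(Dᵣ) min(1, 1 - u_{r+1} + φ⋆)`, and the product bound
follows by induction on `r`.
-/

section
variable {Ω : Type*} [MeasurableSpace Ω] {P : Measure Ω}

lemma mul_sub_le_measureReal_inter [IsFiniteMeasure P] {B D : Set Ω} {φ : ℝ}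
    (h : 0 < P D → |P.real (B ∩ D) / P.real D - P.real B| ≤ φ) :
    P.real D * (P.real B - φ) ≤ P.real (B ∩ D) := by
  rcases eq_zero_or_pos (P D) with hD | hD
  · simp [Measure.real, hD]
  · have hDpos : 0 < P.real D := ENNReal.toReal_pos hD.ne' (measure_ne_top P D)
    have hlower : P.real B - φ ≤ P.real (B ∩ D) / P.real D := by
      linarith [(abs_le.mp (h hD)).1]
    rw [mul_comm, ← le_div_iff₀ hDpos]
    exact hlower

lemma measureReal_compl_inter_le_mul_min [IsFiniteMeasure P] {B D : Set Ω} {φ : ℝ}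
    (hB : MeasurableSet B) (h : P.real D * (P.real B - φ) ≤ P.real (B ∩ D)) :
    P.real (Bᶜ ∩ D) ≤ P.real D * min 1 (1 - P.real B + φ) := by
  have hsplit : P.real (Bᶜ ∩ D) = P.real D - P.real (B ∩ D) := by
    rw [Set.inter_comm B, Set.inter_comm Bᶜ, ← Set.sdiff_eq]
    linarith [measureReal_sdiff_add_inter (μ := P) (s := D) hB]
  rw [mul_min_of_nonneg _ _ measureReal_nonneg, mul_one]
  exact le_min (measureReal_mono Set.inter_subset_right) (by linarith)

lemma measureReal_biInter_compl_le_prod [IsProbabilityMeasure P] {C : ℕ → Set Ω} {φ : ℝ}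
    (hφ : 0 ≤ φ) {n : ℕ} (hC : ∀ j ∈ Finset.Icc 1 n, MeasurableSet (C j))
    (hchain : ∀ r < n, P.real (⋂ j ∈ Finset.Icc 1 r, (C j)ᶜ) * (P.real (C (r + 1)) - φ) ≤
      P.real (C (r + 1) ∩ ⋂ j ∈ Finset.Icc 1 r, (C j)ᶜ)) :
    P.real (⋂ j ∈ Finset.Icc 1 n, (C j)ᶜ) ≤
      ∏ j ∈ Finset.Icc 1 n, min 1 (1 - P.real (C j) + φ) := by
  induction n with
  | zero => simp
  | succ n ih =>
    have hIcc : insert (n + 1) (Finset.Icc 1 n) = Finset.Icc 1 (n + 1) :=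
      Finset.insert_Icc_right_eq_Icc_add_one (by omega)
    have hfactor : 0 ≤ min 1 (1 - P.real (C (n + 1)) + φ) :=
      le_min zero_le_one (by linarith [measureReal_le_one (μ := P) (s := C (n + 1))])
    rw [← hIcc, Finset.set_biInter_insert, Finset.prod_insert (by simp), mul_comm]
    calc P.real ((C (n + 1))ᶜ ∩ ⋂ j ∈ Finset.Icc 1 n, (C j)ᶜ)
        ≤ P.real (⋂ j ∈ Finset.Icc 1 n, (C j)ᶜ) * min 1 (1 - P.real (C (n + 1)) + φ) :=
          measureReal_compl_inter_le_mul_min (hC _ (by simp)) (hchain n n.lt_succ_self)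
      _ ≤ _ := by
          gcongr
          exact ih (fun j hj ↦ hC j (Finset.Icc_subset_Icc_right n.le_succ hj))
            (fun r hr ↦ hchain r (by omega))

end

lemma measurableSet_biInter_compl_biSup {Ω ι : Type*} {𝒜 : ι → MeasurableSpace Ω}
    {C : ι → Set Ω} {s : Finset ι} (hC : ∀ j ∈ s, MeasurableSet[𝒜 j] (C j)) :
    MeasurableSet[⨆ j ∈ s, 𝒜 j] (⋂ j ∈ s, (C j)ᶜ) :=
  .biInter s.countable_toSet fun j hj ↦ le_biSup 𝒜 hj _ (hC j hj).compl

theorem phi_approx_indep_product_general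
    {Ω : Type*} [m0 : MeasurableSpace Ω] (P : Measure Ω) [IsProbabilityMeasure P]
    (M : ℕ)
    (𝒜 : ℕ → MeasurableSpace Ω) (h𝒜 : ∀ j, 𝒜 j ≤ m0)
    (φs : ℝ) (hφs : 0 ≤ φs)
    (hmix : ∀ r, 1 ≤ r → r ≤ M - 1 →
      ∀ C : Set Ω, MeasurableSet[(⨆ j ∈ Finset.Icc 1 r, 𝒜 j)] C → 0 < P C →
        ∀ B : Set Ω, MeasurableSet[𝒜 (r + 1)] B →
          |(P (B ∩ C)).toReal / (P C).toReal - (P B).toReal| ≤ φs)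
    (C : ℕ → Set Ω) (hC : ∀ j ∈ Finset.Icc 1 M, MeasurableSet[𝒜 j] (C j)) :
    (P (⋂ j ∈ Finset.Icc 1 M, (C j)ᶜ)).toReal ≤
      ∏ j ∈ Finset.Icc 1 M, min 1 (1 - (P (C j)).toReal + φs) := by
  refine measureReal_biInter_compl_le_prod hφs (fun j hj ↦ h𝒜 j _ (hC j hj)) fun r hr ↦ ?_
  refine mul_sub_le_measureReal_inter fun hpos ↦ ?_
  rcases Nat.eq_zero_or_pos r with rfl | hr0
  · simpa using hφs
  · have hCr : ∀ j ∈ Finset.Icc 1 r, MeasurableSet[𝒜 j] (C j) := fun j hj ↦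
      hC j (Finset.Icc_subset_Icc_right hr.le hj)
    exact hmix r hr0 (by omega) _ (measurableSet_biInter_compl_biSup hCr) hpos _
      (hC (r + 1) (Finset.mem_Icc.mpr ⟨by omega, hr⟩))

/-- Lemma (approximate independence under φ-mixing), product form:
if each σ-algebra `𝒜 (r+1)` is φ-mixing with coefficient at most `φs` from the
σ-algebra generated by `𝒜 1, …, 𝒜 r`, then for events `C j ∈ 𝒜 j`,
`P(⋂ⱼ (C j)ᶜ) ≤ ∏ⱼ min(1, 1 − P(C j) + φs)`. -/
theorem phi_approx_indep_product
    {Ω : Type*} [m0 : MeasurableSpace Ω] (P : Measure Ω) [IsProbabilityMeasure P]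
    (M : ℕ) (hM : 1 ≤ M)
    (𝒜 : ℕ → MeasurableSpace Ω) (h𝒜 : ∀ j, 𝒜 j ≤ m0)
    (φs : ℝ) (hφs : 0 ≤ φs)
    (hmix : ∀ r, 1 ≤ r → r ≤ M - 1 →
      ∀ C : Set Ω, MeasurableSet[(⨆ j ∈ Finset.Icc 1 r, 𝒜 j)] C → 0 < P C →
        ∀ B : Set Ω, MeasurableSet[𝒜 (r + 1)] B →
          |(P (B ∩ C)).toReal / (P C).toReal - (P B).toReal| ≤ φs)
    (C : ℕ → Set Ω) (hC : ∀ j ∈ Finset.Icc 1 M, MeasurableSet[𝒜 j] (C j)) :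
    (P (⋂ j ∈ Finset.Icc 1 M, (C j)ᶜ)).toReal ≤
      ∏ j ∈ Finset.Icc 1 M, min 1 (1 - (P (C j)).toReal + φs) :=
  phi_approx_indep_product_general (m0 := m0) P M 𝒜 h𝒜 φs hφs hmix C hC
end

section
/- Let (Ω, ℱ, P) be a probability space, let M ≥ 1, and let 𝒜₁, …, 𝒜_M be sub-σ-algebras of ℱ. Let φ⋆ ≥ 0 and suppose that for each 1 ≤ r ≤ M−1, every event C in the σ-algebra generated by 𝒜₁ ∪ ⋯ ∪ 𝒜_r with P(C) > 0, and every event B ∈ 𝒜_{r+1}, one has |P(B ∣ C) − P(B)| ≤ φ⋆. Then for any events C_j ∈ 𝒜_j (j = 1, …, M), writing u_j := P(C_j), we have P(⋂_{j=1}^M C_jᶜ) ≤ exp(−∑_{j=1}^M (u_j − φ⋆)₊), where (x)₊ := max(x, 0). -/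
open MeasureTheory

/-! Conditioning on the event `D` that none of `C 1, …, C r` occurred, φ-mixing gives
`P(C (r+1) ∣ D) ≥ P(C (r+1)) − φ`, so `P(D ∖ C (r+1)) ≤ P(D) (1 − (P(C (r+1)) − φ)₊)`.
Bounding `1 − x ≤ e^{−x}` and iterating over `r` multiplies these factors into the exponential. -/

section

variable {Ω : Type*} [MeasurableSpace Ω]

lemma max_sub_mul_measureReal_le_measureReal_inter
    (μ : Measure Ω) (B D : Set Ω) {φ : ℝ}
    (hmix : 0 < μ D → |μ.real (B ∩ D) / μ.real D - μ.real B| ≤ φ) :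
    max (μ.real B - φ) 0 * μ.real D ≤ μ.real (B ∩ D) := by
  rcases (measureReal_nonneg : 0 ≤ μ.real D).eq_or_lt with hD | hD
  · simp [← hD]
  have hcond : μ.real B - φ ≤ μ.real (B ∩ D) / μ.real D := by
    linarith [(abs_le.mp (hmix (ENNReal.toReal_pos_iff.mp hD).1)).1]
  rw [max_mul_of_nonneg _ _ hD.le, zero_mul]
  exact max_le ((le_div_iff₀ hD).mp hcond) measureReal_nonneg

lemma measureReal_compl_inter_le_mul_exp
    (μ : Measure Ω) [IsFiniteMeasure μ] {B : Set Ω} (hB : MeasurableSet B) (D : Set Ω) {m : ℝ}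
    (hm : m * μ.real D ≤ μ.real (B ∩ D)) :
    μ.real (Bᶜ ∩ D) ≤ μ.real D * Real.exp (-m) := by
  have hsplit : μ.real (D ∩ B) + μ.real (D \ B) = μ.real D := measureReal_inter_add_sdiff hB
  rw [Set.inter_comm] at hm
  rw [Set.inter_comm, ← Set.sdiff_eq]
  nlinarith [Real.add_one_le_exp (-m), (measureReal_nonneg : 0 ≤ μ.real D)]

lemma measureReal_biInter_compl_le_exp_neg_sum
    (μ : Measure Ω) [IsProbabilityMeasure μ] (C : ℕ → Set Ω) (m : ℕ → ℝ) (N : ℕ)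
    (hC : ∀ j ∈ Finset.Icc 1 N, MeasurableSet (C j))
    (hm : ∀ r < N, m (r + 1) * μ.real (⋂ j ∈ Finset.Icc 1 r, (C j)ᶜ) ≤
      μ.real (C (r + 1) ∩ ⋂ j ∈ Finset.Icc 1 r, (C j)ᶜ)) :
    μ.real (⋂ j ∈ Finset.Icc 1 N, (C j)ᶜ) ≤ Real.exp (-∑ j ∈ Finset.Icc 1 N, m j) := by
  induction N with
  | zero => simp
  | succ r ih =>
    have hC' : ∀ j ∈ Finset.Icc 1 r, MeasurableSet (C j) := fun j hj =>
      hC j (Finset.Icc_subset_Icc_right r.le_succ hj)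
    rw [← Finset.insert_Icc_right_eq_Icc_add_one (by omega), Finset.set_biInter_insert,
      Finset.sum_insert (by simp), neg_add, Real.exp_add, mul_comm]
    calc _ ≤ μ.real (⋂ j ∈ Finset.Icc 1 r, (C j)ᶜ) * Real.exp (-m (r + 1)) :=
          measureReal_compl_inter_le_mul_exp μ (hC _ (by simp)) _ (hm r r.lt_succ_self)
      _ ≤ _ := by
          gcongr
          exact ih hC' fun k hk => hm k (hk.trans r.lt_succ_self)

end

theorem phi_approx_indep_exp_general
    {Ω : Type*} [m0 : MeasurableSpace Ω] (P : Measure Ω) [IsProbabilityMeasure P]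
    (M : ℕ)
    (𝒜 : ℕ → MeasurableSpace Ω) (h𝒜 : ∀ j, 𝒜 j ≤ m0)
    (φs : ℝ) (hφs : 0 ≤ φs)
    (hmix : ∀ r, 1 ≤ r → r ≤ M - 1 →
      ∀ C : Set Ω, MeasurableSet[(⨆ j ∈ Finset.Icc 1 r, 𝒜 j)] C → 0 < P C →
        ∀ B : Set Ω, MeasurableSet[𝒜 (r + 1)] B →
          |(P (B ∩ C)).toReal / (P C).toReal - (P B).toReal| ≤ φs)
    (C : ℕ → Set Ω) (hC : ∀ j ∈ Finset.Icc 1 M, MeasurableSet[𝒜 j] (C j)) :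
    (P (⋂ j ∈ Finset.Icc 1 M, (C j)ᶜ)).toReal ≤
      Real.exp (-∑ j ∈ Finset.Icc 1 M, max ((P (C j)).toReal - φs) 0) := by
  refine measureReal_biInter_compl_le_exp_neg_sum P C _ M
    (fun j hj => h𝒜 j _ (hC j hj)) fun r hr => ?_
  refine max_sub_mul_measureReal_le_measureReal_inter P _ _ fun hpos => ?_
  rcases Nat.eq_zero_or_pos r with rfl | hr1
  -- for `r = 0` the conditioning event is `univ`
  · simpa using hφs
  have hmeas : MeasurableSet[⨆ j ∈ Finset.Icc 1 r, 𝒜 j] (⋂ j ∈ Finset.Icc 1 r, (C j)ᶜ) :=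
    .biInter (Finset.Icc 1 r).countable_toSet fun j hj =>
      le_biSup 𝒜 hj _ (hC j (Finset.Icc_subset_Icc_right hr.le hj)).compl
  exact hmix r hr1 (by omega) _ hmeas hpos _ (hC _ (Finset.mem_Icc.mpr ⟨by omega, hr⟩))

/-- Lemma (approximate independence under φ-mixing), exponential form:
for events `C j ∈ 𝒜 j`, `P(⋂ⱼ (C j)ᶜ) ≤ exp(−∑ⱼ (P(C j) − φs)₊)`. -/
theorem phi_approx_indep_exp
    {Ω : Type*} [m0 : MeasurableSpace Ω] (P : Measure Ω) [IsProbabilityMeasure P]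
    (M : ℕ) (hM : 1 ≤ M)
    (𝒜 : ℕ → MeasurableSpace Ω) (h𝒜 : ∀ j, 𝒜 j ≤ m0)
    (φs : ℝ) (hφs : 0 ≤ φs)
    (hmix : ∀ r, 1 ≤ r → r ≤ M - 1 →
      ∀ C : Set Ω, MeasurableSet[(⨆ j ∈ Finset.Icc 1 r, 𝒜 j)] C → 0 < P C →
        ∀ B : Set Ω, MeasurableSet[𝒜 (r + 1)] B →
          |(P (B ∩ C)).toReal / (P C).toReal - (P B).toReal| ≤ φs)
    (C : ℕ → Set Ω) (hC : ∀ j ∈ Finset.Icc 1 M, MeasurableSet[𝒜 j] (C j)) :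
    (P (⋂ j ∈ Finset.Icc 1 M, (C j)ᶜ)).toReal ≤
      Real.exp (-∑ j ∈ Finset.Icc 1 M, max ((P (C j)).toReal - φs) 0) :=
  phi_approx_indep_exp_general (m0 := m0) P M 𝒜 h𝒜 φs hφs hmix C hC
end

section
/- Let (Ω, ℱ, P) be a probability space, let N ≥ 1, let A₁, …, A_N be events, and let L ≥ 0 be an integer. Let φ⋆ ≥ 0 and suppose that for every k with 1 ≤ k and k + L + 1 ≤ N, every event C in σ(A₁, …, A_k) with P(C) > 0, and every event B in σ(A_{k+L+1}, …, A_N), one has |P(B ∣ C) − P(B)| ≤ φ⋆. Then P(⋃_{k=1}^N A_k) ≥ 1 − exp(−(1/(L+1)) ∑_{k=1}^N (P(A_k) − φ⋆)₊). -/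
/-!
Let `E n` be the event that none of `A 1, …, A n` occurs, so `E n ∈ σ(A 1, …, A n)`. Conditioning
`(A n)ᶜ` on `E (n - L - 1)` and using the mixing bound gives
`P(E n) ≤ (1 - (P(A n) - φ)₊) · P(E (n - L - 1))`, trivially also when `n ≤ L + 1`. Multiplying
over the sliding window `∏_{j ≤ L} P(E (n - j))` makes these bounds telescope, and since `P(E n)`
decreases, `P(E N) ^ (L + 1) ≤ ∏ₙ (1 - (P(A n) - φ)₊) ≤ exp (-∑ₙ (P(A n) - φ)₊)`.
-/

open MeasureTheory Finset

theorem pow_succ_le_prod_mul_pow_of_le_mul_sub {f c : ℕ → ℝ} {L N : ℕ} (hf : ∀ n, 0 ≤ f n)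
    (hanti : Antitone f) (hc : ∀ n, 0 ≤ c n)
    (hstep : ∀ n ∈ Icc 1 N, f n ≤ c n * f (n - (L + 1))) :
    f N ^ (L + 1) ≤ (∏ k ∈ Icc 1 N, c k) * f 0 ^ (L + 1) := by
  have window : ∀ n ≤ N,
      ∏ j ∈ range (L + 1), f (n - j) ≤ (∏ k ∈ Icc 1 n, c k) * f 0 ^ (L + 1) := by
    intro n
    induction n with
    | zero => intro; simp
    | succ n ih =>
      intro hn
      have hstep' : f (n + 1) ≤ c (n + 1) * f (n - L) := by
        simpa using hstep (n + 1) (mem_Icc.mpr ⟨by omega, hn⟩)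
      have hwin : 0 ≤ ∏ j ∈ range L, f (n - j) := prod_nonneg fun j _ => hf _
      calc ∏ j ∈ range (L + 1), f (n + 1 - j) = (∏ j ∈ range L, f (n - j)) * f (n + 1) := by
            rw [prod_range_succ']; simp
        _ ≤ (∏ j ∈ range L, f (n - j)) * (c (n + 1) * f (n - L)) := by gcongr
        _ = c (n + 1) * ∏ j ∈ range (L + 1), f (n - j) := by rw [prod_range_succ]; ring
        _ ≤ c (n + 1) * ((∏ k ∈ Icc 1 n, c k) * f 0 ^ (L + 1)) := by
            gcongr
            · exact hc _
            · exact ih (by omega)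
        _ = (∏ k ∈ Icc 1 (n + 1), c k) * f 0 ^ (L + 1) := by
            rw [prod_Icc_succ_top (by omega)]; ring
  calc f N ^ (L + 1) = ∏ _j ∈ range (L + 1), f N := by rw [prod_const, card_range]
    _ ≤ ∏ j ∈ range (L + 1), f (N - j) :=
        prod_le_prod (fun _ _ => hf N) fun _ _ => hanti (Nat.sub_le N _)
    _ ≤ _ := window N le_rfl

theorem prod_one_sub_le_exp_neg_sum {ι : Type*} {s : Finset ι} {g : ι → ℝ}
    (hg : ∀ i ∈ s, g i ≤ 1) : ∏ i ∈ s, (1 - g i) ≤ Real.exp (-∑ i ∈ s, g i) := by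
  rw [← sum_neg_distrib, Real.exp_sum]
  exact prod_le_prod (fun i hi => sub_nonneg.mpr (hg i hi)) fun i _ => Real.one_sub_le_exp_neg _

section Events

variable {Ω : Type*}

def noneOccur (A : ℕ → Set Ω) (n : ℕ) : Set Ω := ⋂ k ∈ Icc 1 n, (A k)ᶜ

variable {A : ℕ → Set Ω}

@[simp] theorem noneOccur_zero : noneOccur A 0 = Set.univ := by simp [noneOccur]

theorem compl_noneOccur (n : ℕ) : (noneOccur A n)ᶜ = ⋃ k ∈ Icc 1 n, A k := by
  simp [noneOccur, Set.compl_iInter]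

theorem antitone_noneOccur : Antitone (noneOccur A) := fun _ _ hmn =>
  Set.biInter_subset_biInter_left (coe_subset.mpr (Icc_subset_Icc_right hmn))

theorem noneOccur_subset_compl {n : ℕ} (hn : 1 ≤ n) : noneOccur A n ⊆ (A n)ᶜ :=
  Set.biInter_subset_of_mem (by simp [hn])

theorem measurableSet_generateFrom_noneOccur (n : ℕ) :
    MeasurableSet[.generateFrom (A '' Set.Icc 1 n)] (noneOccur A n) :=
  .biInter (Icc 1 n).countable_toSet fun k hk =>
    (MeasurableSpace.measurableSet_generateFrom
      (Set.mem_image_of_mem A (by simpa using hk))).compl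

end Events

section Mixing

variable {Ω : Type*} [MeasurableSpace Ω]

/-- The restricted φ-mixing coefficient of `A 1, …, A N` at lag `L + 1` is at most `φ`. -/
def RestrictedPhiMixingLE (P : Measure Ω) (A : ℕ → Set Ω) (N L : ℕ) (φ : ℝ) : Prop :=
  ∀ k, 1 ≤ k → k + L + 1 ≤ N →
    ∀ C : Set Ω, MeasurableSet[MeasurableSpace.generateFrom (A '' Set.Icc 1 k)] C → 0 < P C →
    ∀ B : Set Ω, MeasurableSet[MeasurableSpace.generateFrom (A '' Set.Icc (k + L + 1) N)] B →
      |(P (B ∩ C)).toReal / (P C).toReal - (P B).toReal| ≤ φ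

variable {P : Measure Ω} [IsProbabilityMeasure P] {A : ℕ → Set Ω} {N L n : ℕ} {φ : ℝ}

theorem RestrictedPhiMixingLE.measureReal_noneOccur_le (hmix : RestrictedPhiMixingLE P A N L φ)
    (hφ : 0 ≤ φ) (hA : MeasurableSet (A n)) (hn : 1 ≤ n) (hnN : n ≤ N) :
    P.real (noneOccur A n) ≤ (1 - P.real (A n) + φ) * P.real (noneOccur A (n - (L + 1))) := by
  obtain hnL | ⟨k, hk, rfl⟩ : n ≤ L + 1 ∨ ∃ k, 1 ≤ k ∧ n = k + L + 1 :=
    (le_or_gt n (L + 1)).imp_right fun h => ⟨n - (L + 1), by omega, by omega⟩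
  · have hcompl : P.real (noneOccur A n) ≤ P.real (A n)ᶜ :=
      measureReal_mono (noneOccur_subset_compl hn)
    rw [probReal_compl_eq_one_sub hA] at hcompl
    simpa [Nat.sub_eq_zero_of_le hnL] using hcompl.trans (le_add_of_nonneg_right hφ)
  have hkn : k + L + 1 - (L + 1) = k := by omega
  rw [hkn]
  have hsub : noneOccur A (k + L + 1) ⊆ (A (k + L + 1))ᶜ ∩ noneOccur A k :=
    Set.subset_inter (noneOccur_subset_compl hn) (antitone_noneOccur (by omega))
  rcases eq_zero_or_pos (P (noneOccur A k)) with hzero | hpos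
  · have hnull : P.real (noneOccur A (k + L + 1)) = 0 :=
      measureReal_mono_null (hsub.trans Set.inter_subset_right) (by simp [measureReal_def, hzero])
    simp [hnull, measureReal_def, hzero]
  have hB : MeasurableSet[.generateFrom (A '' Set.Icc (k + L + 1) N)] (A (k + L + 1))ᶜ :=
    (MeasurableSpace.measurableSet_generateFrom
      (Set.mem_image_of_mem A (Set.mem_Icc.mpr ⟨le_rfl, hnN⟩))).compl
  have hcond := (abs_le.mp (hmix k hk hnN _ (measurableSet_generateFrom_noneOccur k) hpos _ hB)).2
  rw [sub_le_iff_le_add', div_le_iff₀ (ENNReal.toReal_pos hpos.ne' (measure_ne_top _ _))] at hcond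
  calc P.real (noneOccur A (k + L + 1))
      ≤ P.real ((A (k + L + 1))ᶜ ∩ noneOccur A k) := measureReal_mono hsub
    _ ≤ (P.real (A (k + L + 1))ᶜ + φ) * P.real (noneOccur A k) := hcond
    _ = (1 - P.real (A (k + L + 1)) + φ) * P.real (noneOccur A k) := by
        rw [probReal_compl_eq_one_sub hA]

theorem measureReal_noneOccur_le_mul (hmix : RestrictedPhiMixingLE P A N L φ) (hφ : 0 ≤ φ)
    (hA : MeasurableSet (A n)) (hn : 1 ≤ n) (hnN : n ≤ N) :
    P.real (noneOccur A n) ≤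
      (1 - max (P.real (A n) - φ) 0) * P.real (noneOccur A (n - (L + 1))) := by
  have hle : P.real (noneOccur A n) ≤ P.real (noneOccur A (n - (L + 1))) :=
    measureReal_mono (antitone_noneOccur (Nat.sub_le n _))
  have hmul := hmix.measureReal_noneOccur_le hφ hA hn hnN
  rcases le_total (P.real (A n) - φ) 0 with h | h
  · simpa [max_eq_right h] using hle
  · simpa [max_eq_left h, sub_sub_eq_add_sub, add_sub_right_comm] using hmul

end Mixing

theorem phi_mixing_union_bound_general
    {Ω : Type*} [MeasurableSpace Ω] (P : Measure Ω) [IsProbabilityMeasure P]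
    (N : ℕ)
    (A : ℕ → Set Ω) (hA : ∀ k ∈ Finset.Icc 1 N, MeasurableSet (A k))
    (L : ℕ) (φs : ℝ) (hφs : 0 ≤ φs)
    (hmix : ∀ k, 1 ≤ k → k + L + 1 ≤ N →
      ∀ C : Set Ω,
        MeasurableSet[MeasurableSpace.generateFrom (A '' Set.Icc 1 k)] C → 0 < P C →
      ∀ B : Set Ω,
        MeasurableSet[MeasurableSpace.generateFrom (A '' Set.Icc (k + L + 1) N)] B →
          |(P (B ∩ C)).toReal / (P C).toReal - (P B).toReal| ≤ φs) :
    1 - Real.exp (-(1 / ((L : ℝ) + 1)) *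
        ∑ k ∈ Finset.Icc 1 N, max ((P (A k)).toReal - φs) 0) ≤
      (P (⋃ k ∈ Finset.Icc 1 N, A k)).toReal := by
  simp only [← measureReal_def]
  set g : ℕ → ℝ := fun k => max (P.real (A k) - φs) 0
  have hg : ∀ k, g k ≤ 1 := fun k =>
    max_le (by linarith [measureReal_le_one (μ := P) (s := A k)]) zero_le_one
  have hpow := pow_succ_le_prod_mul_pow_of_le_mul_sub (f := fun n => P.real (noneOccur A n))
    (c := fun k => 1 - g k) (L := L) (fun _ => measureReal_nonneg)
    (fun _ _ h => measureReal_mono (antitone_noneOccur h)) (fun k => sub_nonneg.mpr (hg k))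
    fun n hn => measureReal_noneOccur_le_mul hmix hφs (hA n hn) (mem_Icc.mp hn).1 (mem_Icc.mp hn).2
  have hprod := prod_one_sub_le_exp_neg_sum (s := Icc 1 N) fun k _ => hg k
  simp only [noneOccur_zero, probReal_univ, one_pow, mul_one] at hpow
  have hroot : Real.exp (-∑ k ∈ Icc 1 N, g k) =
      Real.exp (-(1 / ((L : ℝ) + 1)) * ∑ k ∈ Icc 1 N, g k) ^ (L + 1) := by
    rw [← Real.exp_nat_mul]
    push_cast
    field_simp
  have hfN := le_of_pow_le_pow_left₀ (Nat.succ_ne_zero L) (Real.exp_nonneg _)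
    ((hpow.trans hprod).trans hroot.le)
  have hE : MeasurableSet (noneOccur A N) :=
    .biInter (Icc 1 N).countable_toSet fun k hk => (hA k hk).compl
  rw [← compl_noneOccur, probReal_compl_eq_one_sub hE]
  linarith

/-- Theorem (φ-mixing inequality): if the finite restricted φ-mixing coefficient of the
family `A 1, …, A N` at lag `L + 1` is at most `φs`, then
`P(⋃ₖ A k) ≥ 1 − exp(−(1/(L+1)) ∑ₖ (P(A k) − φs)₊)`. -/
theorem phi_mixing_union_bound
    {Ω : Type*} [MeasurableSpace Ω] (P : Measure Ω) [IsProbabilityMeasure P]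
    (N : ℕ) (hN : 1 ≤ N)
    (A : ℕ → Set Ω) (hA : ∀ k ∈ Finset.Icc 1 N, MeasurableSet (A k))
    (L : ℕ) (φs : ℝ) (hφs : 0 ≤ φs)
    (hmix : ∀ k, 1 ≤ k → k + L + 1 ≤ N →
      ∀ C : Set Ω,
        MeasurableSet[MeasurableSpace.generateFrom (A '' Set.Icc 1 k)] C → 0 < P C →
      ∀ B : Set Ω,
        MeasurableSet[MeasurableSpace.generateFrom (A '' Set.Icc (k + L + 1) N)] B →
          |(P (B ∩ C)).toReal / (P C).toReal - (P B).toReal| ≤ φs) :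
    1 - Real.exp (-(1 / ((L : ℝ) + 1)) *
        ∑ k ∈ Finset.Icc 1 N, max ((P (A k)).toReal - φs) 0) ≤
      (P (⋃ k ∈ Finset.Icc 1 N, A k)).toReal :=
  phi_mixing_union_bound_general P N A hA L φs hφs hmix
end

section
/- Let (Ω, ℱ, P) be a probability space, let N ≥ 1, let A₁, …, A_N be events, and let L ≥ 0 be an integer. Let φ⋆ ≥ 0 and suppose that for every k with 1 ≤ k and k + L + 1 ≤ N, every event C in σ(A₁, …, A_k) with P(C) > 0, and every event B in σ(A_{k+L+1}, …, A_N), one has |P(B ∣ C) − P(B)| ≤ φ⋆. If in addition φ⋆ ≤ min_{1≤k≤N} P(A_k), then P(⋃_{k=1}^N A_k) ≥ 1 − exp(−(S_N − N·φ⋆)/(L+1)), where S_N := ∑_{k=1}^N P(A_k). -/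
/-!
Split `1, …, N` into the `L + 1` residue classes modulo `L + 1`; one of them carries at least a
`1 / (L + 1)` share of `∑ₖ (P(Aₖ) - φ⋆)`. Consecutive indices of a residue class are `L + 1`
apart, so when the events of a class are revealed in increasing order, the past is independent of
the next event up to `φ⋆`: each step multiplies the probability that none has occurred yet by at
most `1 - P(Aₖ) + φ⋆ ≤ exp (-(P(Aₖ) - φ⋆))`.
-/

open MeasureTheory Finset

/-- Restricted φ-mixing of `A 1, …, A N` at lag `L + 1`, with coefficient at most `φ`. -/
def RestrictedPhiMixing {Ω : Type*} [MeasurableSpace Ω] (P : Measure Ω) (A : ℕ → Set Ω)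
    (N L : ℕ) (φ : ℝ) : Prop :=
  ∀ k, 1 ≤ k → k + L + 1 ≤ N →
    ∀ C : Set Ω, MeasurableSet[MeasurableSpace.generateFrom (A '' Set.Icc 1 k)] C → 0 < P C →
    ∀ B : Set Ω, MeasurableSet[MeasurableSpace.generateFrom (A '' Set.Icc (k + L + 1) N)] B →
      |P.real (B ∩ C) / P.real C - P.real B| ≤ φ

theorem Nat.add_le_of_mod_eq_of_lt {a b M : ℕ} (h : a % M = b % M) (hab : a < b) :
    a + M ≤ b := by
  have hdvd : M ∣ b - a := (Nat.modEq_iff_dvd' hab.le).mp h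
  have := Nat.le_of_dvd (by omega) hdvd
  omega

theorem Finset.exists_div_le_sum_filter_mod_eq (s : Finset ℕ) (f : ℕ → ℝ) {M : ℕ} (hM : 0 < M) :
    ∃ r < M, (∑ k ∈ s, f k) / M ≤ ∑ k ∈ s with k % M = r, f k := by
  obtain ⟨r, hr, hle⟩ := exists_le_sum_fiber_of_maps_to_of_nsmul_le_sum
    (fun k _ ↦ mem_range.mpr (Nat.mod_lt k hM)) (nonempty_range_iff.mpr hM.ne')
    (b := (∑ k ∈ s, f k) / M) (w := f) (by
      rw [card_range, nsmul_eq_mul, mul_div_cancel₀ _ (by exact_mod_cast hM.ne')])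
  exact ⟨r, mem_range.mp hr, hle⟩

namespace MeasureTheory

variable {Ω : Type*} [MeasurableSpace Ω] {P : Measure Ω}

theorem measureReal_compl_inter_le [IsFiniteMeasure P] {B C : Set Ω} {φ : ℝ}
    (hB : MeasurableSet B) (h : 0 < P C → |P.real (B ∩ C) / P.real C - P.real B| ≤ φ) :
    P.real (Bᶜ ∩ C) ≤ (1 - P.real B + φ) * P.real C := by
  have hsplit : P.real (Bᶜ ∩ C) = P.real C - P.real (B ∩ C) := by
    rw [← measureReal_sdiff_add_inter (s := C) hB, Set.sdiff_eq_compl_inter, Set.inter_comm C]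
    ring
  rcases measureReal_nonneg.eq_or_lt with hC | hC
  · rw [hsplit, ← hC]
    linarith [measureReal_nonneg (μ := P) (s := B ∩ C)]
  · have hcond : P.real B - φ ≤ P.real (B ∩ C) / P.real C := by
      linarith [(abs_le.mp (h (ENNReal.toReal_pos_iff.mp hC).1)).1]
    rw [le_div_iff₀ hC] at hcond
    linarith

variable {A : ℕ → Set Ω} {N L : ℕ} {φ : ℝ}

theorem RestrictedPhiMixing.measureReal_compl_inter_biInter_le [IsProbabilityMeasure P]
    (hmix : RestrictedPhiMixing P A N L φ) (hφ : 0 ≤ φ) {m : ℕ} (hAm : MeasurableSet (A m))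
    (hmN : m ≤ N) {s : Finset ℕ} (hs : ∀ k ∈ s, 1 ≤ k ∧ k + L + 1 ≤ m) :
    P.real ((A m)ᶜ ∩ ⋂ k ∈ s, (A k)ᶜ) ≤ (1 - P.real (A m) + φ) * P.real (⋂ k ∈ s, (A k)ᶜ) := by
  refine measureReal_compl_inter_le hAm fun hC ↦ ?_
  rcases s.eq_empty_or_nonempty with rfl | ⟨a, ha⟩
  · simpa using hφ
  · have ha' := hs a ha
    refine hmix (m - (L + 1)) (by omega) (by omega) _ ?_ hC _ ?_
    · refine Finset.measurableSet_biInter _ fun k hk ↦ .compl ?_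
      have hk' := hs k hk
      exact MeasurableSpace.measurableSet_generateFrom ⟨k, ⟨hk'.1, by omega⟩, rfl⟩
    · exact MeasurableSpace.measurableSet_generateFrom ⟨m, ⟨by omega, hmN⟩, rfl⟩

theorem RestrictedPhiMixing.measureReal_biInter_compl_le_exp [IsProbabilityMeasure P]
    (hmix : RestrictedPhiMixing P A N L φ) (hφ : 0 ≤ φ)
    (hA : ∀ k ∈ Icc 1 N, MeasurableSet (A k)) {s : Finset ℕ} (hs : s ⊆ Icc 1 N)
    (hsep : ∀ a ∈ s, ∀ b ∈ s, a < b → a + L + 1 ≤ b) :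
    P.real (⋂ k ∈ s, (A k)ᶜ) ≤ Real.exp (-∑ k ∈ s, (P.real (A k) - φ)) := by
  induction s using Finset.induction_on_max with
  | empty => simp
  | insert m s hlt ih =>
    have hm := mem_Icc.mp (hs (mem_insert_self m s))
    have hsub : s ⊆ insert m s := subset_insert m s
    have hstep := hmix.measureReal_compl_inter_biInter_le hφ (hA m (hs (mem_insert_self m s)))
      hm.2 fun k hk ↦ ⟨(mem_Icc.mp (hs (hsub hk))).1,
        hsep k (hsub hk) m (mem_insert_self m s) (hlt k hk)⟩
    have ih := ih (hsub.trans hs) fun a ha b hb ↦ hsep a (hsub ha) b (hsub hb)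
    rw [Finset.set_biInter_insert, sum_insert fun hms ↦ (hlt m hms).false, neg_add, Real.exp_add]
    calc _ ≤ (1 - P.real (A m) + φ) * P.real (⋂ k ∈ s, (A k)ᶜ) := hstep
      _ ≤ Real.exp (-(P.real (A m) - φ)) * Real.exp (-∑ k ∈ s, (P.real (A k) - φ)) :=
        mul_le_mul (by linarith [Real.add_one_le_exp (-(P.real (A m) - φ))]) ih
          measureReal_nonneg (Real.exp_pos _).le

end MeasureTheory

theorem phi_mixing_union_bound_clean_general
    {Ω : Type*} [MeasurableSpace Ω] (P : Measure Ω) [IsProbabilityMeasure P]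
    (N : ℕ)
    (A : ℕ → Set Ω) (hA : ∀ k ∈ Finset.Icc 1 N, MeasurableSet (A k))
    (L : ℕ) (φs : ℝ) (hφs : 0 ≤ φs)
    (hmix : ∀ k, 1 ≤ k → k + L + 1 ≤ N →
      ∀ C : Set Ω,
        MeasurableSet[MeasurableSpace.generateFrom (A '' Set.Icc 1 k)] C → 0 < P C →
      ∀ B : Set Ω,
        MeasurableSet[MeasurableSpace.generateFrom (A '' Set.Icc (k + L + 1) N)] B →
          |(P (B ∩ C)).toReal / (P C).toReal - (P B).toReal| ≤ φs) :
    1 - Real.exp (-((∑ k ∈ Finset.Icc 1 N, (P (A k)).toReal) - (N : ℝ) * φs) /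
        ((L : ℝ) + 1)) ≤
      (P (⋃ k ∈ Finset.Icc 1 N, A k)).toReal := by
  simp only [← measureReal_def]
  obtain ⟨r, -, hr⟩ := (Icc 1 N).exists_div_le_sum_filter_mod_eq
    (fun k ↦ P.real (A k) - φs) (Nat.zero_lt_succ L)
  set cls := {k ∈ Icc 1 N | k % (L + 1) = r}
  have hsep : ∀ a ∈ cls, ∀ b ∈ cls, a < b → a + L + 1 ≤ b := fun a ha b hb ↦
    Nat.add_le_of_mod_eq_of_lt ((mem_filter.mp ha).2.trans (mem_filter.mp hb).2.symm)
  have hclass := RestrictedPhiMixing.measureReal_biInter_compl_le_exp hmix hφs hA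
    (filter_subset _ _) hsep
  have hcompl : 1 - P.real (⋃ k ∈ Icc 1 N, A k) ≤ P.real (⋂ k ∈ cls, (A k)ᶜ) := by
    rw [← probReal_compl_eq_one_sub ((Icc 1 N).measurableSet_biUnion hA), Set.compl_iUnion₂]
    exact measureReal_mono (Set.biInter_mono (filter_subset _ _) fun _ _ ↦ subset_rfl)
  have hsum : ∑ k ∈ Icc 1 N, (P.real (A k) - φs) = ∑ k ∈ Icc 1 N, P.real (A k) - N * φs := by
    simp [sum_sub_distrib]
  have hexp := Real.exp_le_exp.mpr (neg_le_neg hr)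
  rw [hsum, Nat.cast_succ] at hexp
  rw [neg_div]
  linarith

/-- Theorem (φ-mixing inequality, clean residual form): if moreover
`φs ≤ min_{1≤k≤N} P(A k)`, then
`P(⋃ₖ A k) ≥ 1 − exp(−(S_N − N·φs)/(L+1))` where `S_N = ∑ₖ P(A k)`. -/
theorem phi_mixing_union_bound_clean
    {Ω : Type*} [MeasurableSpace Ω] (P : Measure Ω) [IsProbabilityMeasure P]
    (N : ℕ) (hN : 1 ≤ N)
    (A : ℕ → Set Ω) (hA : ∀ k ∈ Finset.Icc 1 N, MeasurableSet (A k))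
    (L : ℕ) (φs : ℝ) (hφs : 0 ≤ φs)
    (hmix : ∀ k, 1 ≤ k → k + L + 1 ≤ N →
      ∀ C : Set Ω,
        MeasurableSet[MeasurableSpace.generateFrom (A '' Set.Icc 1 k)] C → 0 < P C →
      ∀ B : Set Ω,
        MeasurableSet[MeasurableSpace.generateFrom (A '' Set.Icc (k + L + 1) N)] B →
          |(P (B ∩ C)).toReal / (P C).toReal - (P B).toReal| ≤ φs)
    (hlow : ∀ k ∈ Finset.Icc 1 N, φs ≤ (P (A k)).toReal) :
    1 - Real.exp (-((∑ k ∈ Finset.Icc 1 N, (P (A k)).toReal) - (N : ℝ) * φs) /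
        ((L : ℝ) + 1)) ≤
      (P (⋃ k ∈ Finset.Icc 1 N, A k)).toReal :=
  phi_mixing_union_bound_clean_general P N A hA L φs hφs hmix
end

section
/- Let (Ω, ℱ, P) be a probability space, let N ≥ 1, let A₁, …, A_N be events, and let φ : ℕ → [0, ∞) be a function such that for every integer L ≥ 0, every k with 1 ≤ k and k + L + 1 ≤ N, every event C in σ(A₁, …, A_k) with P(C) > 0, and every event B in σ(A_{k+L+1}, …, A_N), one has |P(B ∣ C) − P(B)| ≤ φ(L+1). Then P(⋃_{k=1}^N A_k) ≥ 1 − exp(−Ψ), where Ψ := sup over integers L ≥ 0 of (1/(L+1)) ∑_{k=1}^N (P(A_k) − φ(L+1))₊. -/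
/-!
Fix a lag `n = L + 1` and split `1, …, N` into the `n` residue classes mod `n`; by pigeonhole
one class carries at least `1 / n` of the total `∑ₖ (P(A k) − φ n)₊`. Along that class any two
indices are at least `n` apart, so conditioning on the complements of the earlier events of the
class changes `P((A k)ᶜ)` by at most `φ n`. Each new complement therefore multiplies the
probability by at most `min 1 (1 − P(A k) + φ n) ≤ exp (−(P(A k) − φ n)₊)`, giving
`1 − P(⋃ₖ A k) ≤ exp (−(1 / n) ∑ₖ (P(A k) − φ n)₊)` for every lag; then take logarithms
and the supremum over `L`.
-/

open MeasureTheory Finset Real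

lemma Real.min_one_sub_add_le_exp_neg_max (p c : ℝ) :
    min 1 (1 - p + c) ≤ exp (-max (p - c) 0) := by
  rcases le_total (p - c) 0 with h | h
  · simp [max_eq_right h]
  · rw [max_eq_left h]
    linarith [min_le_right 1 (1 - p + c), add_one_le_exp (-(p - c))]

lemma Real.le_exp_neg_iSup {ι : Type*} [Nonempty ι] {f : ι → ℝ} {x : ℝ}
    (h : ∀ i, x ≤ exp (-f i)) : x ≤ exp (-⨆ i, f i) := by
  rcases le_or_gt x 0 with hx | hx
  · exact hx.trans (exp_pos _).le
  have hsup : (⨆ i, f i) ≤ -log x :=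
    ciSup_le fun i => le_neg.mp ((log_le_iff_le_exp hx).mpr (h i))
  simpa [exp_log hx] using exp_le_exp.mpr (le_neg.mpr hsup)

lemma MeasureTheory.measureReal_inter_le_min_mul {Ω : Type*} [MeasurableSpace Ω]
    {P : Measure Ω} [IsFiniteMeasure P] {B C : Set Ω} {c : ℝ}
    (h : 0 < P C → |P.real (B ∩ C) / P.real C - P.real B| ≤ c) :
    P.real (B ∩ C) ≤ min 1 (P.real B + c) * P.real C := by
  rcases eq_zero_or_pos (P C) with hC | hC
  · simp [Measure.real, measure_mono_null Set.inter_subset_right hC, hC]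
  have hCpos : 0 < P.real C := ENNReal.toReal_pos hC.ne' (measure_ne_top P C)
  rw [min_mul_of_nonneg _ _ hCpos.le, one_mul]
  refine le_min (measureReal_mono Set.inter_subset_right) ?_
  rw [← div_le_iff₀ hCpos]
  linarith [(abs_le.mp (h hC)).2]

namespace PhiMixing

variable {Ω : Type*} {A : ℕ → Set Ω}

lemma measurableSet_generateFrom_biInter_compl {s : Finset ℕ} {I : Set ℕ} (hs : ↑s ⊆ I) :
    MeasurableSet[MeasurableSpace.generateFrom (A '' I)] (⋂ k ∈ s, (A k)ᶜ) :=
  Finset.measurableSet_biInter _ fun _ hk =>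
    (MeasurableSpace.measurableSet_generateFrom (Set.mem_image_of_mem A (hs hk))).compl

variable [MeasurableSpace Ω] {P : Measure Ω} {N n : ℕ} {c : ℝ}

/-- `c` bounds the restricted φ-mixing coefficient of `A 1, …, A N` at lag `n`. -/
def CoeffLE (P : Measure Ω) (A : ℕ → Set Ω) (N n : ℕ) (c : ℝ) : Prop :=
  ∀ k, 1 ≤ k → k + n ≤ N → ∀ C : Set Ω,
    MeasurableSet[MeasurableSpace.generateFrom (A '' Set.Icc 1 k)] C → 0 < P C →
    ∀ B : Set Ω, MeasurableSet[MeasurableSpace.generateFrom (A '' Set.Icc (k + n) N)] B →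
      |P.real (B ∩ C) / P.real C - P.real B| ≤ c

variable [IsProbabilityMeasure P]

lemma measureReal_compl_inter_biInter_compl_le (hmix : CoeffLE P A N n c) (hc : 0 ≤ c)
    {a : ℕ} (hAa : MeasurableSet (A a)) (haN : a ≤ N) {s : Finset ℕ}
    (hs : ∀ k ∈ s, 1 ≤ k) (hsa : ∀ k ∈ s, k + n ≤ a) :
    P.real ((A a)ᶜ ∩ ⋂ k ∈ s, (A k)ᶜ) ≤
      min 1 (1 - P.real (A a) + c) * P.real (⋂ k ∈ s, (A k)ᶜ) := by
  rw [← probReal_compl_eq_one_sub hAa]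
  refine measureReal_inter_le_min_mul fun hC => ?_
  rcases s.eq_empty_or_nonempty with rfl | hne
  · simpa using hc
  have hmax := s.max'_mem hne
  have hpast : MeasurableSet[MeasurableSpace.generateFrom (A '' Set.Icc 1 (s.max' hne))]
      (⋂ k ∈ s, (A k)ᶜ) :=
    measurableSet_generateFrom_biInter_compl fun k hk => ⟨hs k hk, s.le_max' k hk⟩
  have hfuture : MeasurableSet[MeasurableSpace.generateFrom (A '' Set.Icc (s.max' hne + n) N)]
      (A a)ᶜ :=
    (MeasurableSpace.measurableSet_generateFrom
      (Set.mem_image_of_mem A (Set.mem_Icc.mpr ⟨hsa _ hmax, haN⟩))).compl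
  exact hmix _ (hs _ hmax) ((hsa _ hmax).trans haN) _ hpast hC _ hfuture

lemma measureReal_biInter_compl_le_exp (hA : ∀ k ∈ Icc 1 N, MeasurableSet (A k))
    (hmix : CoeffLE P A N n c) (hc : 0 ≤ c) (S : Finset ℕ) (hS : S ⊆ Icc 1 N)
    (hsep : ∀ i ∈ S, ∀ j ∈ S, i < j → i + n ≤ j) :
    P.real (⋂ k ∈ S, (A k)ᶜ) ≤ exp (-∑ k ∈ S, max (P.real (A k) - c) 0) := by
  induction S using Finset.induction_on_max with
  | empty => simp
  | insert a s hlt ih =>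
    have ha : a ∈ Icc 1 N := hS (mem_insert_self a s)
    have hs : s ⊆ Icc 1 N := (subset_insert a s).trans hS
    have hsa : ∀ k ∈ s, k + n ≤ a := fun k hk =>
      hsep k (mem_insert_of_mem hk) a (mem_insert_self a s) (hlt k hk)
    rw [set_biInter_insert, sum_insert fun has => (hlt a has).false, neg_add, exp_add]
    calc P.real ((A a)ᶜ ∩ ⋂ k ∈ s, (A k)ᶜ)
        ≤ min 1 (1 - P.real (A a) + c) * P.real (⋂ k ∈ s, (A k)ᶜ) :=
          measureReal_compl_inter_biInter_compl_le hmix hc (hA a ha) (mem_Icc.mp ha).2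
            (fun k hk => (mem_Icc.mp (hs hk)).1) hsa
      _ ≤ _ := mul_le_mul (min_one_sub_add_le_exp_neg_max _ _)
          (ih hs fun i hi j hj => hsep i (mem_insert_of_mem hi) j (mem_insert_of_mem hj))
          measureReal_nonneg (exp_pos _).le

lemma measureReal_biInter_compl_le_exp_div (hA : ∀ k ∈ Icc 1 N, MeasurableSet (A k))
    (hmix : CoeffLE P A N n c) (hc : 0 ≤ c) (hn : 0 < n) :
    P.real (⋂ k ∈ Icc 1 N, (A k)ᶜ) ≤
      exp (-((1 / (n : ℝ)) * ∑ k ∈ Icc 1 N, max (P.real (A k) - c) 0)) := by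
  set w : ℕ → ℝ := fun k => max (P.real (A k) - c) 0
  obtain ⟨r, -, hr⟩ := exists_le_sum_fiber_of_maps_to_of_nsmul_le_sum (s := Icc 1 N)
    (f := (· % n)) (w := w) (b := (1 / (n : ℝ)) * ∑ k ∈ Icc 1 N, w k)
    (fun k _ => mem_range.mpr (Nat.mod_lt k hn)) ⟨0, mem_range.mpr hn⟩
    (by rw [card_range, nsmul_eq_mul, ← mul_assoc, mul_one_div_cancel (by positivity), one_mul])
  have hsep : ∀ i ∈ {k ∈ Icc 1 N | k % n = r}, ∀ j ∈ {k ∈ Icc 1 N | k % n = r},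
      i < j → i + n ≤ j := fun i hi j hj hij =>
    Nat.ModEq.add_le_of_lt ((mem_filter.mp hi).2.trans (mem_filter.mp hj).2.symm) hij
  calc P.real (⋂ k ∈ Icc 1 N, (A k)ᶜ)
      ≤ P.real (⋂ k ∈ {k ∈ Icc 1 N | k % n = r}, (A k)ᶜ) :=
        measureReal_mono (Set.biInter_subset_biInter_left fun k hk => (mem_filter.mp hk).1)
    _ ≤ exp (-∑ k ∈ {k ∈ Icc 1 N | k % n = r}, w k) :=
        measureReal_biInter_compl_le_exp hA hmix hc _ (filter_subset _ _) hsep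
    _ ≤ _ := exp_le_exp.mpr (neg_le_neg hr)

end PhiMixing

theorem phi_mixing_union_bound_optimised_general
    {Ω : Type*} [MeasurableSpace Ω] (P : Measure Ω) [IsProbabilityMeasure P]
    (N : ℕ)
    (A : ℕ → Set Ω) (hA : ∀ k ∈ Finset.Icc 1 N, MeasurableSet (A k))
    (φ : ℕ → ℝ) (hφ : ∀ n, 0 ≤ φ n)
    (hmix : ∀ L : ℕ, ∀ k, 1 ≤ k → k + L + 1 ≤ N →
      ∀ C : Set Ω,
        MeasurableSet[MeasurableSpace.generateFrom (A '' Set.Icc 1 k)] C → 0 < P C →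
      ∀ B : Set Ω,
        MeasurableSet[MeasurableSpace.generateFrom (A '' Set.Icc (k + L + 1) N)] B →
          |(P (B ∩ C)).toReal / (P C).toReal - (P B).toReal| ≤ φ (L + 1)) :
    1 - Real.exp (-(⨆ L : ℕ, (1 / ((L : ℝ) + 1)) *
        ∑ k ∈ Finset.Icc 1 N, max ((P (A k)).toReal - φ (L + 1)) 0)) ≤
      (P (⋃ k ∈ Finset.Icc 1 N, A k)).toReal := by
  have hcompl : P.real (⋂ k ∈ Icc 1 N, (A k)ᶜ) = 1 - P.real (⋃ k ∈ Icc 1 N, A k) := by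
    rw [← probReal_compl_eq_one_sub (measurableSet_biUnion _ hA), Set.compl_iUnion₂]
  have hlag (L : ℕ) := PhiMixing.measureReal_biInter_compl_le_exp_div (n := L + 1) hA (hmix L)
    (hφ (L + 1)) L.succ_pos
  push_cast at hlag
  have hsup := Real.le_exp_neg_iSup hlag
  simp only [Measure.real] at hsup hcompl
  linarith

/-- Corollary (optimised exponent): if `φ (L+1)` bounds the finite restricted φ-mixing
coefficient of the family at every lag `L + 1`, then
`P(⋃ₖ A k) ≥ 1 − exp(−Ψ)` with
`Ψ = sup_{L ≥ 0} (1/(L+1)) ∑ₖ (P(A k) − φ(L+1))₊`. -/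
theorem phi_mixing_union_bound_optimised
    {Ω : Type*} [MeasurableSpace Ω] (P : Measure Ω) [IsProbabilityMeasure P]
    (N : ℕ) (hN : 1 ≤ N)
    (A : ℕ → Set Ω) (hA : ∀ k ∈ Finset.Icc 1 N, MeasurableSet (A k))
    (φ : ℕ → ℝ) (hφ : ∀ n, 0 ≤ φ n)
    (hmix : ∀ L : ℕ, ∀ k, 1 ≤ k → k + L + 1 ≤ N →
      ∀ C : Set Ω,
        MeasurableSet[MeasurableSpace.generateFrom (A '' Set.Icc 1 k)] C → 0 < P C →
      ∀ B : Set Ω,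
        MeasurableSet[MeasurableSpace.generateFrom (A '' Set.Icc (k + L + 1) N)] B →
          |(P (B ∩ C)).toReal / (P C).toReal - (P B).toReal| ≤ φ (L + 1)) :
    1 - Real.exp (-(⨆ L : ℕ, (1 / ((L : ℝ) + 1)) *
        ∑ k ∈ Finset.Icc 1 N, max ((P (A k)).toReal - φ (L + 1)) 0)) ≤
      (P (⋃ k ∈ Finset.Icc 1 N, A k)).toReal :=
  phi_mixing_union_bound_optimised_general P N A hA φ hφ hmix
end

section
/- Let (Ω, ℱ, P) be a probability space and let (A_k)_{k≥1} be a sequence of events. Let Φ : ℕ → ℕ be non-decreasing with ∑_{k=1}^{Φ(n)} P(A_k) ≥ n for every n ≥ 1. Let L ≥ 0 be an integer and let φ⋆ ≥ 0 be such that for every k ≥ 1, every event C in σ(A₁, …, A_k) with P(C) > 0, and every event B in σ(A_j : j ≥ k+L+1), one has |P(B ∣ C) − P(B)| ≤ φ⋆. Then for all integers n ≥ 1 and i ≥ 0, setting M_{i,n} := Φ(i+n) − i, one has P(⋃_{k=i+1}^{Φ(i+n)} A_k) ≥ 1 − exp(−(1/(L+1)) (n − M_{i,n}·φ⋆)₊).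 -/
/-!
Cut the window `W = {i + 1, …, Φ (i + n)}` into its residue classes mod `L + 1`. Since
`∑_{k ∈ W} (P (A k) - φ) ≥ n - M φ` (the first `i` events carry mass at most `i`), one class `T`
carries at least a `1 / (L + 1)` share of it. Consecutive indices of `T` are `L + 1` apart, so
conditioning on the earlier events of `T`, mixing gives `P (A bᶜ ∣ C) ≤ 1 - P (A b) + φ ≤
exp (-(P (A b) - φ))`, and inductively `P (⋂_{k ∈ T} A kᶜ) ≤ exp (-∑_{k ∈ T} (P (A k) - φ))`.
-/

open MeasureTheory Finset Real

lemma exists_div_le_sum_filter_mod (s : Finset ℕ) (f : ℕ → ℝ) {m : ℕ} (hm : 0 < m) :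
    ∃ r < m, (∑ k ∈ s, f k) / m ≤ ∑ k ∈ s with k % m = r, f k := by
  obtain ⟨r, hr, h⟩ := exists_le_sum_fiber_of_maps_to_of_nsmul_le_sum
    (fun k _ ↦ mem_range.mpr (k.mod_lt hm)) (nonempty_range_iff.mpr hm.ne')
    (b := (∑ k ∈ s, f k) / m) (w := f) (by
      rw [card_range, nsmul_eq_mul, mul_div_cancel₀ _ (by positivity)])
  exact ⟨r, mem_range.mp hr, h⟩

lemma sum_Icc_one_le_add_sum_Icc {p : ℕ → ℝ} (hp0 : ∀ k, 0 ≤ p k) (hp1 : ∀ k, p k ≤ 1)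
    (i N : ℕ) : ∑ k ∈ Icc 1 N, p k ≤ i + ∑ k ∈ Icc (i + 1) N, p k := by
  have hsub : Icc 1 N ⊆ Icc 1 i ∪ Icc (i + 1) N := fun k hk ↦ by
    simp only [mem_union, mem_Icc] at hk ⊢; omega
  have hdisj : Disjoint (Icc 1 i) (Icc (i + 1) N) :=
    disjoint_left.mpr fun k hk hk' ↦ by simp only [mem_Icc] at hk hk'; omega
  have hhead : ∑ k ∈ Icc 1 i, p k ≤ i := by
    simpa using sum_le_card_nsmul (Icc 1 i) p 1 fun k _ ↦ hp1 k
  calc ∑ k ∈ Icc 1 N, p k ≤ ∑ k ∈ Icc 1 i ∪ Icc (i + 1) N, p k :=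
        sum_le_sum_of_subset_of_nonneg hsub fun k _ _ ↦ hp0 k
    _ = ∑ k ∈ Icc 1 i, p k + ∑ k ∈ Icc (i + 1) N, p k := sum_union hdisj
    _ ≤ i + ∑ k ∈ Icc (i + 1) N, p k := by gcongr

section

variable {Ω : Type*} [MeasurableSpace Ω]

def PhiMixing (P : Measure Ω) (A : ℕ → Set Ω) (L : ℕ) (φ : ℝ) : Prop :=
  ∀ k, 1 ≤ k →
    ∀ C : Set Ω, MeasurableSet[MeasurableSpace.generateFrom (A '' Set.Icc 1 k)] C → 0 < P C →
    ∀ B : Set Ω, MeasurableSet[MeasurableSpace.generateFrom (A '' Set.Ici (k + L + 1))] B →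
      |(P (B ∩ C)).toReal / (P C).toReal - (P B).toReal| ≤ φ

lemma measureReal_inter_le_of_abs_div_sub_le {P : Measure Ω} [IsFiniteMeasure P]
    {B C : Set Ω} {φ : ℝ} (h : 0 < P C → |P.real (B ∩ C) / P.real C - P.real B| ≤ φ) :
    P.real (B ∩ C) ≤ (P.real B + φ) * P.real C := by
  rcases eq_zero_or_pos (P C) with hC | hC
  · have : P.real C = 0 := by simp [Measure.real, hC]
    rw [this, mul_zero]
    exact (measureReal_mono Set.inter_subset_right).trans this.le
  · have hC' : 0 < P.real C := ENNReal.toReal_pos hC.ne' (measure_ne_top P C)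
    rw [← div_le_iff₀ hC']
    linarith [(abs_le.mp (h hC)).2]

variable {P : Measure Ω} [IsProbabilityMeasure P] {A : ℕ → Set Ω} {L : ℕ} {φ : ℝ}

lemma PhiMixing.measureReal_compl_inter_biInter_compl_le_s7 (hmix : PhiMixing P A L φ)
    (hφ : 0 ≤ φ) {a : ℕ} (ha : MeasurableSet (A a)) {s : Finset ℕ}
    (hs : ∀ k ∈ s, 1 ≤ k ∧ k + L + 1 ≤ a) :
    P.real ((A a)ᶜ ∩ ⋂ k ∈ s, (A k)ᶜ) ≤
      (1 - P.real (A a) + φ) * P.real (⋂ k ∈ s, (A k)ᶜ) := by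
  rcases s.eq_empty_or_nonempty with rfl | hne
  · simp [probReal_compl_eq_one_sub ha, hφ]
  obtain ⟨hk₁, hkL⟩ := hs _ (s.max'_mem hne)
  rw [← probReal_compl_eq_one_sub ha]
  have hC : MeasurableSet[MeasurableSpace.generateFrom (A '' Set.Icc 1 (s.max' hne))]
      (⋂ k ∈ s, (A k)ᶜ) :=
    .biInter s.countable_toSet fun k hk ↦ .compl <| MeasurableSpace.measurableSet_generateFrom <|
      Set.mem_image_of_mem A ⟨(hs k hk).1, s.le_max' k hk⟩
  have hB : MeasurableSet[MeasurableSpace.generateFrom (A '' Set.Ici (s.max' hne + L + 1))]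
      (A a)ᶜ :=
    (MeasurableSpace.measurableSet_generateFrom (Set.mem_image_of_mem A hkL)).compl
  exact measureReal_inter_le_of_abs_div_sub_le (hmix _ hk₁ _ hC · _ hB)

lemma PhiMixing.measureReal_biInter_compl_le_exp_s7 (hmix : PhiMixing P A L φ)
    (hA : ∀ k, 1 ≤ k → MeasurableSet (A k)) (hφ : 0 ≤ φ) (T : Finset ℕ)
    (hT : ∀ k ∈ T, 1 ≤ k) (hsep : ∀ a ∈ T, ∀ b ∈ T, a < b → a + L + 1 ≤ b) :
    P.real (⋂ k ∈ T, (A k)ᶜ) ≤ exp (-∑ k ∈ T, (P.real (A k) - φ)) := by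
  induction T using Finset.induction_on_max with
  | empty => simp
  | insert a s hlt ih =>
    have ha : a ∉ s := fun h ↦ (hlt a h).false
    have hs : ∀ k ∈ s, 1 ≤ k ∧ k + L + 1 ≤ a := fun k hk ↦
      ⟨hT k (mem_insert_of_mem hk),
        hsep k (mem_insert_of_mem hk) a (mem_insert_self a s) (hlt k hk)⟩
    have ih := ih (fun k hk ↦ (hs k hk).1) fun x hx y hy ↦
      hsep x (mem_insert_of_mem hx) y (mem_insert_of_mem hy)
    rw [Finset.set_biInter_insert, sum_insert ha, neg_add, exp_add]
    calc P.real ((A a)ᶜ ∩ ⋂ k ∈ s, (A k)ᶜ)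
        ≤ (1 - P.real (A a) + φ) * P.real (⋂ k ∈ s, (A k)ᶜ) :=
          hmix.measureReal_compl_inter_biInter_compl_le_s7 hφ
            (hA a (hT a (mem_insert_self a s))) hs
      _ ≤ exp (-(P.real (A a) - φ)) * exp (-∑ k ∈ s, (P.real (A k) - φ)) := by
          gcongr
          linarith [add_one_le_exp (-(P.real (A a) - φ))]

lemma PhiMixing.one_sub_exp_le_measureReal_biUnion (hmix : PhiMixing P A L φ)
    (hA : ∀ k, 1 ≤ k → MeasurableSet (A k)) (hφ : 0 ≤ φ) {W : Finset ℕ} (hW : ∀ k ∈ W, 1 ≤ k)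
    {t : ℝ} (ht : t ≤ ∑ k ∈ W, (P.real (A k) - φ)) :
    1 - exp (-(t / (L + 1))) ≤ P.real (⋃ k ∈ W, A k) := by
  obtain ⟨r, -, hr⟩ := exists_div_le_sum_filter_mod W (fun k ↦ P.real (A k) - φ)
    (m := L + 1) (by positivity)
  set T := W.filter (· % (L + 1) = r)
  have hsep : ∀ a ∈ T, ∀ b ∈ T, a < b → a + L + 1 ≤ b := fun a ha b hb hab ↦
    Nat.ModEq.add_le_of_lt (m := L + 1) ((mem_filter.mp ha).2.trans (mem_filter.mp hb).2.symm) hab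
  have hTW : ⋂ k ∈ W, (A k)ᶜ ⊆ ⋂ k ∈ T, (A k)ᶜ :=
    Set.biInter_subset_biInter_left (coe_subset.mpr (filter_subset _ W))
  calc 1 - exp (-(t / (L + 1)))
      ≤ 1 - exp (-∑ k ∈ T, (P.real (A k) - φ)) := by
        gcongr
        exact (div_le_div_of_nonneg_right ht (by positivity)).trans (mod_cast hr)
    _ ≤ 1 - P.real (⋂ k ∈ T, (A k)ᶜ) := by
        linarith [hmix.measureReal_biInter_compl_le_exp_s7 hA hφ T
          (fun k hk ↦ hW k (mem_filter.mp hk).1) hsep]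
    _ ≤ 1 - P.real (⋂ k ∈ W, (A k)ᶜ) := by linarith [measureReal_mono (μ := P) hTW]
    _ = P.real (⋃ k ∈ W, A k) := by
        rw [← Set.compl_iUnion₂, probReal_compl_eq_one_sub
          (W.measurableSet_biUnion fun k hk ↦ hA k (hW k hk)), sub_sub_cancel]

end

theorem phi_mixing_window_bound_general
    {Ω : Type*} [MeasurableSpace Ω] (P : Measure Ω) [IsProbabilityMeasure P]
    (A : ℕ → Set Ω) (hA : ∀ k, 1 ≤ k → MeasurableSet (A k))
    (Φ : ℕ → ℕ)
    (hmass : ∀ n : ℕ, 1 ≤ n → (n : ℝ) ≤ ∑ k ∈ Finset.Icc 1 (Φ n), (P (A k)).toReal)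
    (L : ℕ) (φs : ℝ) (hφs : 0 ≤ φs)
    (hmix : ∀ k, 1 ≤ k →
      ∀ C : Set Ω,
        MeasurableSet[MeasurableSpace.generateFrom (A '' Set.Icc 1 k)] C → 0 < P C →
      ∀ B : Set Ω,
        MeasurableSet[MeasurableSpace.generateFrom (A '' Set.Ici (k + L + 1))] B →
          |(P (B ∩ C)).toReal / (P C).toReal - (P B).toReal| ≤ φs) :
    ∀ n : ℕ, 1 ≤ n → ∀ i : ℕ,
      1 - Real.exp (-(1 / ((L : ℝ) + 1)) *
          max ((n : ℝ) - ((Φ (i + n) - i : ℕ) : ℝ) * φs) 0) ≤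
        (P (⋃ k ∈ Finset.Icc (i + 1) (Φ (i + n)), A k)).toReal := by
  intro n hn i
  set c : ℝ := n - ((Φ (i + n) - i : ℕ) : ℝ) * φs
  rcases le_total c 0 with hc | hc
  · simp [max_eq_right hc]
  rw [max_eq_left hc, neg_mul, one_div_mul_eq_div]
  refine PhiMixing.one_sub_exp_le_measureReal_biUnion hmix hA hφs
    (fun k hk ↦ by have := (mem_Icc.mp hk).1; omega) ?_
  have hmass_window := (hmass (i + n) (by omega)).trans <| sum_Icc_one_le_add_sum_Icc
    (fun k ↦ measureReal_nonneg) (fun k ↦ measureReal_le_one) i (Φ (i + n))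
  rw [sum_sub_distrib, sum_const, nsmul_eq_mul, Nat.card_Icc, Nat.add_sub_add_right]
  push_cast at hmass_window ⊢
  linarith

/-- Corollary (finite-window rate form, φ-mixing case): if `Φ` is non-decreasing with
`∑_{k=1}^{Φ n} P(A k) ≥ n` for all `n ≥ 1` and the sequence is φ-mixing at lag `L + 1`
with coefficient at most `φs`, then for `n ≥ 1`, `i ≥ 0`, with `M = Φ(i+n) − i`,
`P(⋃_{k=i+1}^{Φ(i+n)} A k) ≥ 1 − exp(−(1/(L+1))(n − M·φs)₊)`. -/
theorem phi_mixing_window_bound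
    {Ω : Type*} [MeasurableSpace Ω] (P : Measure Ω) [IsProbabilityMeasure P]
    (A : ℕ → Set Ω) (hA : ∀ k, 1 ≤ k → MeasurableSet (A k))
    (Φ : ℕ → ℕ) (hΦ : Monotone Φ)
    (hmass : ∀ n : ℕ, 1 ≤ n → (n : ℝ) ≤ ∑ k ∈ Finset.Icc 1 (Φ n), (P (A k)).toReal)
    (L : ℕ) (φs : ℝ) (hφs : 0 ≤ φs)
    (hmix : ∀ k, 1 ≤ k →
      ∀ C : Set Ω,
        MeasurableSet[MeasurableSpace.generateFrom (A '' Set.Icc 1 k)] C → 0 < P C →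
      ∀ B : Set Ω,
        MeasurableSet[MeasurableSpace.generateFrom (A '' Set.Ici (k + L + 1))] B →
          |(P (B ∩ C)).toReal / (P C).toReal - (P B).toReal| ≤ φs) :
    ∀ n : ℕ, 1 ≤ n → ∀ i : ℕ,
      1 - Real.exp (-(1 / ((L : ℝ) + 1)) *
          max ((n : ℝ) - ((Φ (i + n) - i : ℕ) : ℝ) * φs) 0) ≤
        (P (⋃ k ∈ Finset.Icc (i + 1) (Φ (i + n)), A k)).toReal :=
  phi_mixing_window_bound_general P A hA Φ hmass L φs hφs hmix
end

section
/- For an integer m ≥ 0, call a finite family of events A₁, …, A_N on a probability space m-dependent if for any two index sets I, J ⊆ {1, …, N} with min{|i − j| : i ∈ I, j ∈ J} > m, the σ-algebras σ(A_i : i ∈ I) and σ(A_j : j ∈ J) are independent. Then for every c > 1/(m+1) there exist an integer N ≥ 1, a probability space (Ω, ℱ, P), and an m-dependent family of events A₁, …, A_N on it such that P(⋃_{k=1}^N A_k) < 1 − exp(−c·∑_{k=1}^N P(A_k)). -/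
open MeasureTheory

/-- A finite family of events `A 1, …, A N` is `m`-dependent if any two subcollections
whose index sets are separated by more than `m` positions generate independent
σ-algebras. -/
def MDepFamily {Ω : Type} [MeasurableSpace Ω] (P : Measure Ω)
    (m N : ℕ) (A : ℕ → Set Ω) : Prop :=
  ∀ I J : Finset ℕ, ↑I ⊆ Set.Icc 1 N → ↑J ⊆ Set.Icc 1 N →
    (∀ i ∈ I, ∀ j ∈ J, m < Nat.dist i j) →
    ProbabilityTheory.Indep (MeasurableSpace.generateFrom (A '' ↑I))
      (MeasurableSpace.generateFrom (A '' ↑J)) P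

/-!
Take `m + 1` copies of a single event `B` with `P(B) = p`. No two indices in `{1, …, m + 1}`
are more than `m` apart, so the family is `m`-dependent, its union is `B` and its total mass is
`(m + 1) p`. With `a = c (m + 1) > 1` it remains to find `p` with `p < 1 - exp (-a p)`, which
holds for small `p > 0` because the right-hand side has slope `a > 1` at `0`.
-/

open ProbabilityTheory

theorem mDepFamily_of_le_succ {Ω : Type} [MeasurableSpace Ω] (P : Measure Ω)
    [IsZeroOrProbabilityMeasure P] {m N : ℕ} (A : ℕ → Set Ω) (hN : N ≤ m + 1) :
    MDepFamily P m N A := by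
  intro I J hI hJ hIJ
  rcases I.eq_empty_or_nonempty with rfl | ⟨i, hi⟩
  · simpa using indep_bot_left _
  rcases J.eq_empty_or_nonempty with rfl | ⟨j, hj⟩
  · simpa using indep_bot_right _
  have hi' := hI hi
  have hj' := hJ hj
  have hdist := hIJ i hi j hj
  simp only [Set.mem_Icc, Nat.dist] at hi' hj' hdist
  omega

theorem Real.exists_exp_neg_mul_lt_one_sub {a : ℝ} (ha : 1 < a) :
    ∃ p : unitInterval, Real.exp (-(a * p)) < 1 - p := by
  set p : ℝ := (a - 1) / (2 * a)
  have ha0 : 0 < a := by linarith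
  have hap : a * p = (a - 1) / 2 := by simp only [p]; field_simp
  have hp0 : 0 ≤ p := by positivity
  have hp1 : p ≤ 1 := by rw [div_le_one (by positivity)]; linarith
  refine ⟨⟨p, hp0, hp1⟩, ?_⟩
  -- `exp (a p) ≥ 1 + a p`, and `(1 - p) (1 + a p) > 1` as long as `p < 1 - 1 / a`
  calc Real.exp (-(a * p)) = (Real.exp (a * p))⁻¹ := Real.exp_neg _
    _ ≤ (a * p + 1)⁻¹ := inv_anti₀ (by positivity) (Real.add_one_le_exp _)
    _ < 1 - p := by
      rw [inv_lt_iff_one_lt_mul₀ (by positivity), hap]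
      have : (1 - p) * a = (a + 1) / 2 := by
        simp only [p]; field_simp; ring
      nlinarith

/-- No constant `c > 1/(m+1)` is admissible: for each such `c` there is a finite
`m`-dependent family of events on some probability space with
`P(⋃ₖ A k) < 1 − exp(−c ∑ₖ P(A k))`. -/
theorem m_dependent_constant_upper (m : ℕ) (c : ℝ) (hc : 1 / ((m : ℝ) + 1) < c) :
    ∃ N : ℕ, 1 ≤ N ∧
      ∃ (Ω : Type) (inst : MeasurableSpace Ω) (P : Measure Ω),
        IsProbabilityMeasure P ∧
        ∃ A : ℕ → Set Ω,
          (∀ k ∈ Finset.Icc 1 N, MeasurableSet (A k)) ∧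
          MDepFamily P m N A ∧
          (P (⋃ k ∈ Finset.Icc 1 N, A k)).toReal <
            1 - Real.exp (-(c * ∑ k ∈ Finset.Icc 1 N, (P (A k)).toReal)) := by
  have ha : 1 < c * (m + 1) := by rwa [div_lt_iff₀ (by positivity)] at hc
  obtain ⟨p, hp⟩ := Real.exists_exp_neg_mul_lt_one_sub ha
  refine ⟨m + 1, by omega, Bool, inferInstance, bernoulliMeasure true false p, inferInstance,
    fun _ => {true}, fun _ _ => measurableSet_singleton true,
    mDepFamily_of_le_succ _ _ le_rfl, ?_⟩
  have hunion : ⋃ k ∈ Finset.Icc 1 (m + 1), ({true} : Set Bool) = {true} :=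
    Set.biUnion_const ⟨1, by simp⟩ _
  have hB : (bernoulliMeasure true false p).real {true} = p :=
    bernoulliMeasure_real_apply_of_mem_of_notMem p (measurableSet_singleton _) rfl (by simp)
  simp only [hunion, ← measureReal_def, hB, Finset.sum_const, Nat.card_Icc, nsmul_eq_mul]
  push_cast
  rw [← mul_assoc]
  linarith
end
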